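/- Let 𝐁 be an additive track category, 𝐛 a full track subcategory, and 𝐚 = 𝐛_≃ the corresponding full additive subcategory of 𝐀 = 𝐁_≃. Suppose either (a) 𝐁 is 𝕃-additive and 𝐚 is closed under 𝕃 (X ∈ 𝐚 implies 𝕃X ∈ 𝐚), or (b) 𝐁 is ℝ-additive and ℝ preserves 𝐚-exactness of chain complexes in 𝐀. Then for any secondary chain complex (A,d,δ) in 𝐁, 𝐚-exactness of its image (A,[d]) in 𝐀 implies 𝐛-exactness of (A,d,δ). -/

import Mathlib

/-!
Track categories.  A track category is a category enriched in groupoids, i.e. a strict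
2-category (`Bicategory` + `Bicategory.Strict`) all of whose 2-cells ("tracks") are
invertible.  Invertibility of all 2-cells is imposed by the hypothesis `hinv` below.
A strict zero object is an object whose hom-groupoids from and to any object are
trivial (exactly one map, exactly one track).
-/

open CategoryTheory CategoryTheory.Bicategory

universe w v u

/-- A strict zero object `∗` in a (strict) track category: for every `X` the
hom-groupoids `⟦X,∗⟧` and `⟦∗,X⟧` have exactly one object and one morphism. -/
class StrictZero (B : Type u) [Bicategory.{w, v} B] where
  zobj : B
  uniqueTo : ∀ X : B, Unique (X ⟶ zobj)
  uniqueFrom : ∀ X : B, Unique (zobj ⟶ X)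
  uniqueTrackTo : ∀ (X : B) (f g : X ⟶ zobj), Unique (f ⟶ g)
  uniqueTrackFrom : ∀ (X : B) (f g : zobj ⟶ X), Unique (f ⟶ g)

section

variable {B : Type u} [Bicategory.{w, v} B] [Bicategory.Strict B] [StrictZero B]

/-- The zero map `0_{X,Y} : X → ∗ → Y`. -/
def zmap (X Y : B) : X ⟶ Y :=
  (StrictZero.uniqueTo X).default ≫ (StrictZero.uniqueFrom Y).default

lemma zmap_comp (X : B) {Y Z : B} (f : Y ⟶ Z) : zmap X Y ≫ f = zmap X Z := by
  unfold zmap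
  rw [Bicategory.Strict.assoc]
  congr 1
  haveI := StrictZero.uniqueFrom (B := B) Z
  exact Subsingleton.elim _ _

lemma comp_zmap {X Y : B} (f : X ⟶ Y) (Z : B) : f ≫ zmap Y Z = zmap X Z := by
  unfold zmap
  rw [← Bicategory.Strict.assoc]
  congr 1
  haveI := StrictZero.uniqueTo (B := B) X
  exact Subsingleton.elim _ _

end

/-- A secondary chain complex `(A, d, δ)` in a track category `B`: objects `A_n`, maps
`d_n : A_{n+1} ⟶ A_n` and tracks `δ_n : d_n d_{n+1} ⇒ 0` such that
`d_{n-1} δ_n = δ_{n-1} d_{n+1}` (as tracks `d_{n-1} d_n d_{n+1} ⇒ 0`). -/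
structure SecChainComplex (B : Type u) [Bicategory.{w, v} B] [Bicategory.Strict B]
    [StrictZero B] where
  X : ℤ → B
  d : ∀ n : ℤ, X (n + 1) ⟶ X n
  δ : ∀ n : ℤ, (d (n + 1) ≫ d n) ⟶ zmap (X (n + 1 + 1)) (X n)
  compat : ∀ n : ℤ,
    (δ (n + 1) ▷ d n) ≫ eqToHom (zmap_comp (X (n + 1 + 1 + 1)) (d n)) =
      eqToHom (Bicategory.Strict.assoc (d (n + 1 + 1)) (d (n + 1)) (d n)) ≫
        (d (n + 1 + 1) ◁ δ n) ≫ eqToHom (comp_zmap (d (n + 1 + 1)) (X n))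

namespace SecChainComplex

variable {B : Type u} [Bicategory.{w, v} B] [Bicategory.Strict B] [StrictZero B]

/-- A `𝐛`-cycle of degree `n+2` in a secondary chain complex: a map `c : T ⟶ A_{n+2}`
together with a track `γ : d_{n+1} c ⇒ 0` such that `d_n γ = δ_n c`. -/
def IsSecCycle (A : SecChainComplex B) {T : B} (n : ℤ) (c : T ⟶ A.X (n + 1 + 1))
    (γ : c ≫ A.d (n + 1) ⟶ zmap T (A.X (n + 1))) : Prop :=
  (γ ▷ A.d n) ≫ eqToHom (zmap_comp T (A.d n)) =
    eqToHom (Bicategory.Strict.assoc c (A.d (n + 1)) (A.d n)) ≫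
      (c ◁ A.δ n) ≫ eqToHom (comp_zmap c (A.X n))

/-- A `𝐛`-cycle `(c,γ)` is a `𝐛`-boundary if there are `a : T ⟶ A_{n+3}` and a track
`α : c ⇒ d_{n+2} a` with `γ = δ_{n+1} a □ d_{n+1} α`. -/
def IsSecBoundary (A : SecChainComplex B) {T : B} (n : ℤ) (c : T ⟶ A.X (n + 1 + 1))
    (γ : c ≫ A.d (n + 1) ⟶ zmap T (A.X (n + 1))) : Prop :=
  ∃ (a : T ⟶ A.X (n + 1 + 1 + 1)) (α : c ⟶ a ≫ A.d (n + 1 + 1)),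
    γ = (α ▷ A.d (n + 1)) ≫
        eqToHom (Bicategory.Strict.assoc a (A.d (n + 1 + 1)) (A.d (n + 1))) ≫
        (a ◁ A.δ (n + 1)) ≫ eqToHom (comp_zmap a (A.X (n + 1)))

/-- `𝐛`-exactness of a secondary chain complex, `𝐛` being the full track subcategory
on the objects satisfying `Pb`: every `𝐛`-cycle is a `𝐛`-boundary. -/
def IsSecExact (A : SecChainComplex B) (Pb : B → Prop) : Prop :=
  ∀ (n : ℤ) (T : B), Pb T → ∀ (c : T ⟶ A.X (n + 1 + 1))
    (γ : c ≫ A.d (n + 1) ⟶ zmap T (A.X (n + 1))),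
    A.IsSecCycle n c γ → A.IsSecBoundary n c γ

/-- A `B₀`-augmented secondary chain complex: `X_{-1} = B₀`, `X_{-n} = ∗` and
`δ_{-n}` the identity track for `n > 1`. -/
structure IsAugmented (A : SecChainComplex B) (B₀ : B) : Prop where
  eq_neg_one : A.X (-1) = B₀
  eq_zero_of_lt : ∀ n : ℤ, n < -1 → A.X n = StrictZero.zobj (B := B)
  δ_eqToHom : ∀ n : ℤ, n < -1 →
    ∀ h : A.d (n + 1) ≫ A.d n = zmap (A.X (n + 1 + 1)) (A.X n), A.δ n = eqToHom h

/-- A `𝐛`-resolution of `B₀`: a `𝐛`-exact `B₀`-augmented secondary chain complex with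
all terms in nonnegative degrees in `𝐛`. -/
structure IsSecResolution (A : SecChainComplex B) (Pb : B → Prop) (B₀ : B) : Prop where
  augmented : A.IsAugmented B₀
  exact : A.IsSecExact Pb
  mem : ∀ n : ℤ, 0 ≤ n → Pb (A.X n)

end SecChainComplex

/-- A `ℤ`-indexed chain complex in an additive category `C`. -/
structure ChainComplexZ (C : Type*) [Category C] [Preadditive C] where
  X : ℤ → C
  d : ∀ n : ℤ, X (n + 1) ⟶ X n
  dd : ∀ n : ℤ, d (n + 1) ≫ d n = 0

namespace ChainComplexZ

variable {C : Type*} [Category C] [Preadditive C]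

/-- The chain complex of abelian groups `Hom(T, A_•)` is exact (acyclic). -/
def HomExact (A : ChainComplexZ C) (T : C) : Prop :=
  ∀ (n : ℤ) (a : T ⟶ A.X (n + 1)), a ≫ A.d n = 0 →
    ∃ b : T ⟶ A.X (n + 1 + 1), b ≫ A.d (n + 1) = a

/-- `𝐚`-exactness of a chain complex, where `𝐚` is the full subcategory on the
objects satisfying `P`. -/
def aExact (A : ChainComplexZ C) (P : C → Prop) : Prop :=
  ∀ T : C, P T → A.HomExact T

end ChainComplexZ

/-! ### The homotopy category of a track category, and additive track categories -/

section HomotopyCategory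

variable (B : Type u) [Bicategory.{w, v} B] [Bicategory.Strict B]

/-- The underlying (1-)category of a strict track category. -/
instance (priority := 100) trackUnderlyingCategory : Category.{v} B :=
  { (inferInstance : CategoryStruct.{v} B) with
    id_comp := fun f => Bicategory.Strict.id_comp f
    comp_id := fun f => Bicategory.Strict.comp_id f
    assoc := fun f g h => Bicategory.Strict.assoc f g h }

/-- Two maps are homotopic if there is a track between them. -/
def homotopyRel : HomRel B := fun {X Y} (f g : X ⟶ Y) => Nonempty ((f : X ⟶ Y) ⟶ g)

/-- The homotopy category `𝐀 = 𝐁_≃` of the track category `𝐁`, obtained by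
identifying homotopic maps. -/
abbrev HoCat := CategoryTheory.Quotient (homotopyRel B)

variable {B}

/-- An object of `𝐁`, seen in the homotopy category. -/
def hQ (X : B) : HoCat B := (CategoryTheory.Quotient.functor (homotopyRel B)).obj X

/-- The homotopy class of a map. -/
def hQm {X Y : B} (f : X ⟶ Y) : hQ X ⟶ hQ Y :=
  (CategoryTheory.Quotient.functor (homotopyRel B)).map f

end HomotopyCategory

section Image

variable {B : Type u} [Bicategory.{w, v} B] [Bicategory.Strict B] [StrictZero B]
  [Preadditive (HoCat B)]

/-- The image `(A, [d])` in the homotopy category of a secondary chain complex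
`(A, d, δ)`.  (The hypothesis `hzero` states that the homotopy class of the zero map
`0_{X,Y}` is the zero element of the abelian hom-group of the additive homotopy
category.) -/
def SecChainComplex.hoComplex (S : SecChainComplex B)
    (hzero : ∀ X Y : B, hQm (zmap X Y) = (0 : hQ X ⟶ hQ Y)) :
    ChainComplexZ (HoCat B) where
  X n := hQ (S.X n)
  d n := hQm (S.d n)
  dd n := by
    have h1 : hQm (S.d (n + 1)) ≫ hQm (S.d n) = hQm (S.d (n + 1) ≫ S.d n) :=
      ((CategoryTheory.Quotient.functor (homotopyRel B)).map_comp _ _).symm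
    have h2 : hQm (S.d (n + 1) ≫ S.d n) = hQm (zmap (S.X (n + 1 + 1)) (S.X n)) :=
      CategoryTheory.Quotient.sound _ ⟨S.δ n⟩
    rw [h1, h2, hzero]

end Image

section Linear

variable (B : Type u) [Bicategory.{w, v} B] [Bicategory.Strict B] [StrictZero B]
  [Preadditive (HoCat B)]

/-- An `𝕃`-additive track category: an additive endofunctor `𝕃` of the additive
homotopy category `𝐀`, left-representing the bifunctor `D`, i.e. together with a
system of isomorphisms `σ_f : D(X,Y) = Hom_𝐀(𝕃X, Y) ≅ Aut(f)` as in the definition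
of a linear track extension. -/
structure LAdditiveStr where
  L : HoCat B ⥤ HoCat B
  Ladd : L.Additive
  σ : ∀ {X Y : B} (f : X ⟶ Y), (L.obj (hQ X) ⟶ hQ Y) ≃ (f ⟶ f)
  σ_add : ∀ {X Y : B} (f : X ⟶ Y) (a b : L.obj (hQ X) ⟶ hQ Y),
    σ f (a + b) = σ f a ≫ σ f b
  σ_post : ∀ {X Y Z : B} (f : X ⟶ Y) (g : Y ⟶ Z) (a : L.obj (hQ X) ⟶ hQ Y),
    σ (f ≫ g) (a ≫ hQm g) = σ f a ▷ g
  σ_pre : ∀ {X Y Z : B} (f : X ⟶ Y) (g : Y ⟶ Z) (b : L.obj (hQ Y) ⟶ hQ Z),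
    σ (f ≫ g) (L.map (hQm f) ≫ b) = f ◁ σ g b
  σ_natural : ∀ {X Y : B} {f f' : X ⟶ Y} (η : f ⟶ f') (a : L.obj (hQ X) ⟶ hQ Y),
    σ f a ≫ η = η ≫ σ f' a

/-- An `ℝ`-additive track category: an additive endofunctor `ℝ` of the additive
homotopy category `𝐀` right-representing the bifunctor `D`, with isomorphisms
`σ_f : D(X,Y) = Hom_𝐀(X, ℝY) ≅ Aut(f)`. -/
structure RAdditiveStr where
  R : HoCat B ⥤ HoCat B
  Radd : R.Additive
  Rzero : ∀ {X Y : HoCat B}, R.map (0 : X ⟶ Y) = 0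
  σ : ∀ {X Y : B} (f : X ⟶ Y), (hQ X ⟶ R.obj (hQ Y)) ≃ (f ⟶ f)
  σ_add : ∀ {X Y : B} (f : X ⟶ Y) (a b : hQ X ⟶ R.obj (hQ Y)),
    σ f (a + b) = σ f a ≫ σ f b
  σ_post : ∀ {X Y Z : B} (f : X ⟶ Y) (g : Y ⟶ Z) (a : hQ X ⟶ R.obj (hQ Y)),
    σ (f ≫ g) (a ≫ R.map (hQm g)) = σ f a ▷ g
  σ_pre : ∀ {X Y Z : B} (f : X ⟶ Y) (g : Y ⟶ Z) (b : hQ Y ⟶ R.obj (hQ Z)),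
    σ (f ≫ g) (hQm f ≫ b) = f ◁ σ g b
  σ_natural : ∀ {X Y : B} {f f' : X ⟶ Y} (η : f ⟶ f') (a : hQ X ⟶ R.obj (hQ Y)),
    σ f a ≫ η = η ≫ σ f' a

end Linear

/-- Mapping a `ℤ`-indexed chain complex through a zero-preserving functor. -/
def ChainComplexZ.mapComplex {C : Type*} [Category C] [Preadditive C]
    {D : Type*} [Category D] [Preadditive D] (A : ChainComplexZ C) (F : C ⥤ D)
    (hF : ∀ {X Y : C}, F.map (0 : X ⟶ Y) = 0) : ChainComplexZ D where
  X n := F.obj (A.X n)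
  d n := F.map (A.d n)
  dd n := by rw [← F.map_comp, A.dd n, hF]

/-
A cycle `(c, γ)` gives a cycle `[c]` of the image complex, so `𝐚`-exactness yields `a` and a
track `α : c ⇒ d a`, and `γ' = δ a □ d α` is a second track `d c ⇒ 0` making `c` a cycle. The
two cycle conditions say that `γ` and `γ'` agree after whiskering with `d`, so `γ'⁻¹ □ γ` is
`σ(ξ)` for some `ξ ∈ D` with `d ξ = 0`. Exactness of `Hom(𝕃T, A)` (case (a), as `𝕃T ∈ 𝐚`) or
of `Hom(T, ℝA)` (case (b)) writes `ξ = d η`, and correcting `α` by the automorphism `σ(η)` of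
`c` turns `γ` into the boundary track of `a`.
-/

section StrictTracks

variable {B : Type u} [Bicategory.{w, v} B] [Bicategory.Strict B]

lemma homotopyRel_congruence (hinv : ∀ {X Y : B} {f g : X ⟶ Y} (η : f ⟶ g), IsIso η) :
    Congruence (homotopyRel B) where
  equivalence :=
    { refl := fun f => ⟨𝟙 f⟩
      symm := fun ⟨η⟩ => have := hinv η; ⟨inv η⟩
      trans := fun ⟨η⟩ ⟨θ⟩ => ⟨η ≫ θ⟩ }
  comp_left := fun f _ _ ⟨η⟩ => ⟨f ◁ η⟩
  comp_right := fun g ⟨η⟩ => ⟨η ▷ g⟩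

lemma hQm_comp {X Y Z : B} (f : X ⟶ Y) (g : Y ⟶ Z) : hQm (f ≫ g) = hQm f ≫ hQm g :=
  (Quotient.functor (homotopyRel B)).map_comp f g

lemma hQm_eq_iff (hinv : ∀ {X Y : B} {f g : X ⟶ Y} (η : f ⟶ g), IsIso η) {X Y : B}
    (f g : X ⟶ Y) : hQm f = hQm g ↔ Nonempty (f ⟶ g) :=
  have := homotopyRel_congruence hinv
  Quotient.functor_map_eq_iff _ f g

/-- Exactness of `Aut(v) → Aut(v ≫ g) → Aut(v ≫ g ≫ h)`, transported along tracks
`v ≫ g ⇒ w`. -/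
def WhiskerExact (T : B) {Y Z W : B} (g : Y ⟶ Z) (h : Z ⟶ W) : Prop :=
  ∀ (v : T ⟶ Y) (w : T ⟶ Z) (γ γ' : v ≫ g ⟶ w), γ ▷ h = γ' ▷ h →
    ∃ τ : v ⟶ v, (τ ▷ g) ≫ γ' = γ

/-- Automorphism groups of the maps out of `T`, represented by a family `D` as in a linear
track extension; for an additive track category `D X` is `Hom(𝕃T, X)` or `Hom(T, ℝX)`. -/
structure TrackAutRep (T : B) where
  D : B → Type v
  [zero : ∀ X, Zero (D X)]
  post : ∀ {X X' : B}, (X ⟶ X') → D X → D X'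
  σ : ∀ {X : B} (f : T ⟶ X), D X ≃ (f ⟶ f)
  σ_zero : ∀ {X : B} (f : T ⟶ X), σ f 0 = 𝟙 f
  σ_post : ∀ {X X' : B} (f : T ⟶ X) (k : X ⟶ X') (a : D X), σ (f ≫ k) (post k a) = σ f a ▷ k
  σ_natural : ∀ {X : B} {f f' : T ⟶ X} (η : f ⟶ f') (a : D X), σ f a ≫ η = η ≫ σ f' a

attribute [instance] TrackAutRep.zero

lemma TrackAutRep.whiskerExact {T : B} (ρ : TrackAutRep T)
    (hinv : ∀ {X Y : B} {f g : X ⟶ Y} (η : f ⟶ g), IsIso η) {Y Z W : B} {g : Y ⟶ Z}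
    {h : Z ⟶ W} (hexact : ∀ ξ : ρ.D Z, ρ.post h ξ = 0 → ∃ η, ρ.post g η = ξ) :
    WhiskerExact T g h := by
  intro v w γ γ' hγ
  have := hinv γ'
  set e := inv γ' ≫ γ
  have he : e ▷ h = 𝟙 _ := by
    rw [comp_whiskerRight, hγ, ← comp_whiskerRight, IsIso.inv_hom_id, id_whiskerRight]
  obtain ⟨η, hη⟩ := hexact ((ρ.σ w).symm e) <| (ρ.σ (w ≫ h)).injective <| by
    rw [ρ.σ_post, Equiv.apply_symm_apply, he, ρ.σ_zero]
  refine ⟨ρ.σ v η, ?_⟩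
  calc (ρ.σ v η ▷ g) ≫ γ' = ρ.σ (v ≫ g) ((ρ.σ w).symm e) ≫ γ' := by rw [← ρ.σ_post, hη]
    _ = γ' ≫ e := by rw [ρ.σ_natural, Equiv.apply_symm_apply]
    _ = γ := IsIso.hom_inv_id_assoc γ' γ

variable [StrictZero B]

instance {X : B} (f g : X ⟶ StrictZero.zobj (B := B)) : Subsingleton (f ⟶ g) :=
  @Unique.instSubsingleton _ (StrictZero.uniqueTrackTo X f g)

lemma whiskerRight_zmap {T X Y : B} {f g : T ⟶ X} (η : f ⟶ g) :
    η ▷ zmap X Y = eqToHom ((comp_zmap f Y).trans (comp_zmap g Y).symm) := by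
  have hu : f ≫ (StrictZero.uniqueTo X).default = g ≫ (StrictZero.uniqueTo X).default :=
    (StrictZero.uniqueTo T).instSubsingleton.elim _ _
  unfold zmap
  rw [whiskerRight_comp, Subsingleton.elim (η ▷ _) (eqToHom hu)]
  simp [Bicategory.Strict.associator_eqToIso]

variable [Preadditive (HoCat B)]

def LAdditiveStr.autRep (l : LAdditiveStr B)
    (hinv : ∀ {X Y : B} {f g : X ⟶ Y} (η : f ⟶ g), IsIso η) (T : B) : TrackAutRep T where
  D X := l.L.obj (hQ T) ⟶ hQ X
  post k a := a ≫ hQm k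
  σ := l.σ
  σ_zero f := have := hinv (l.σ f 0); (cancel_epi (l.σ f 0)).1 (by
    rw [← l.σ_add, add_zero, Category.comp_id])
  σ_post := l.σ_post
  σ_natural := l.σ_natural

def RAdditiveStr.autRep (r : RAdditiveStr B)
    (hinv : ∀ {X Y : B} {f g : X ⟶ Y} (η : f ⟶ g), IsIso η) (T : B) : TrackAutRep T where
  D X := hQ T ⟶ r.R.obj (hQ X)
  post k a := a ≫ r.R.map (hQm k)
  σ := r.σ
  σ_zero f := have := hinv (r.σ f 0); (cancel_epi (r.σ f 0)).1 (by
    rw [← r.σ_add, add_zero, Category.comp_id])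
  σ_post := r.σ_post
  σ_natural := r.σ_natural

end StrictTracks

namespace SecChainComplex

variable {B : Type u} [Bicategory.{w, v} B] [Bicategory.Strict B] [StrictZero B]
  (A : SecChainComplex B) {T : B} (n : ℤ)

def boundaryTrack {c : T ⟶ A.X (n + 1 + 1)} (a : T ⟶ A.X (n + 1 + 1 + 1))
    (α : c ⟶ a ≫ A.d (n + 1 + 1)) : c ≫ A.d (n + 1) ⟶ zmap T (A.X (n + 1)) :=
  (α ▷ A.d (n + 1)) ≫ eqToHom (Bicategory.Strict.assoc a (A.d (n + 1 + 1)) (A.d (n + 1))) ≫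
    (a ◁ A.δ (n + 1)) ≫ eqToHom (comp_zmap a (A.X (n + 1)))

lemma isSecCycle_boundaryTrack {c : T ⟶ A.X (n + 1 + 1)} (a : T ⟶ A.X (n + 1 + 1 + 1))
    (α : c ⟶ a ≫ A.d (n + 1 + 1)) : A.IsSecCycle n c (A.boundaryTrack n a α) := by
  have hδ : A.δ (n + 1) ▷ A.d n =
      (eqToHom (Bicategory.Strict.assoc (A.d (n + 1 + 1)) (A.d (n + 1)) (A.d n)) ≫
        (A.d (n + 1 + 1) ◁ A.δ n) ≫ eqToHom (comp_zmap (A.d (n + 1 + 1)) (A.X n))) ≫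
        eqToHom (zmap_comp (A.X (n + 1 + 1 + 1)) (A.d n)).symm := by
    rw [← A.compat n]; simp
  -- `compat` turns `(a ◁ δ) ▷ d` into `(a ≫ d) ◁ δ`; interchanging it with `α ▷ (d ≫ d)` leaves
  -- `α ▷ 0`, which is trivial since tracks into `∗` are unique.
  unfold IsSecCycle boundaryTrack
  simp only [comp_whiskerRight, eqToHom_whiskerRight, whisker_assoc, hδ, whiskerLeft_comp,
    whiskerLeft_eqToHom, Strict.associator_eqToIso, eqToIso.hom, eqToIso.inv, Category.assoc,
    eqToHom_trans, eqToHom_trans_assoc]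
  rw [whiskerRight_comp_symm, comp_whiskerLeft_symm]
  simp only [Strict.associator_eqToIso, eqToIso.hom, eqToIso.inv, Category.assoc,
    eqToHom_trans_assoc, eqToHom_refl, Category.id_comp]
  rw [← whisker_exchange_assoc, whiskerRight_zmap]
  simp

variable {A n} in
lemma whiskerRight_eq_of_isSecCycle {c : T ⟶ A.X (n + 1 + 1)}
    {γ γ' : c ≫ A.d (n + 1) ⟶ zmap T (A.X (n + 1))} (hγ : A.IsSecCycle n c γ)
    (hγ' : A.IsSecCycle n c γ') : γ ▷ A.d n = γ' ▷ A.d n :=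
  (cancel_mono _).1 (hγ.trans hγ'.symm)

lemma isSecBoundary_of_whiskerExact (hA : WhiskerExact T (A.d (n + 1)) (A.d n))
    {c : T ⟶ A.X (n + 1 + 1)} {γ : c ≫ A.d (n + 1) ⟶ zmap T (A.X (n + 1))}
    (hγ : A.IsSecCycle n c γ) (a : T ⟶ A.X (n + 1 + 1 + 1)) (α : c ⟶ a ≫ A.d (n + 1 + 1)) :
    A.IsSecBoundary n c γ := by
  obtain ⟨τ, hτ⟩ := hA c _ γ (A.boundaryTrack n a α)
    (whiskerRight_eq_of_isSecCycle hγ (A.isSecCycle_boundaryTrack n a α))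
  refine ⟨a, τ ≫ α, ?_⟩
  rw [← hτ, boundaryTrack, comp_whiskerRight]
  exact (Category.assoc _ _ _).symm

lemma exists_track_lift [Preadditive (HoCat B)]
    (hinv : ∀ {X Y : B} {f g : X ⟶ Y} (η : f ⟶ g), IsIso η)
    (hzero : ∀ X Y : B, hQm (zmap X Y) = (0 : hQ X ⟶ hQ Y))
    (hT : (A.hoComplex hzero).HomExact (hQ T)) {c : T ⟶ A.X (n + 1 + 1)}
    (γ : c ≫ A.d (n + 1) ⟶ zmap T (A.X (n + 1))) :
    ∃ a : T ⟶ A.X (n + 1 + 1 + 1), Nonempty (c ⟶ a ≫ A.d (n + 1 + 1)) := by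
  have hc : hQm c ≫ hQm (A.d (n + 1)) = 0 := by
    rw [← hQm_comp, (hQm_eq_iff hinv _ _).2 ⟨γ⟩, hzero]
  obtain ⟨b, hb⟩ := hT (n + 1) (hQm c) hc
  obtain ⟨a, rfl⟩ := (Quotient.functor (homotopyRel B)).map_surjective b
  exact ⟨a, (hQm_eq_iff hinv _ _).1 (hb.symm.trans (hQm_comp _ _).symm)⟩

end SecChainComplex

theorem statement13_general {B : Type u} [Bicategory.{w, v} B] [Bicategory.Strict B]
    [StrictZero B]
    -- all tracks are invertible:
    (hinv : ∀ {X' Y' : B} {f g : X' ⟶ Y'} (η : f ⟶ g), IsIso η)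
    -- the homotopy category is additive:
    [Preadditive (HoCat B)]
    (hzero : ∀ X Y : B, hQm (zmap X Y) = (0 : hQ X ⟶ hQ Y))
    -- the full track subcategory `𝐛` and the corresponding subcategory `𝐚 = 𝐛_≃`:
    (Pb : B → Prop)
    -- (a) `𝕃`-additive and `𝐚` closed under suspension, or (b) `ℝ`-additive with `ℝ`
    -- preserving `𝐚`-exactness:
    (hLR :
      (∃ l : LAdditiveStr B, ∀ Z : HoCat B, Pb Z.as → Pb ((l.L.obj Z).as)) ∨
      (∃ r : RAdditiveStr B, ∀ A : ChainComplexZ (HoCat B),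
         A.aExact (fun Z => Pb Z.as) →
         (A.mapComplex r.R r.Rzero).aExact (fun Z => Pb Z.as)))
    (S : SecChainComplex B)
    (hex : (S.hoComplex hzero).aExact (fun Z => Pb Z.as)) :
    S.IsSecExact Pb := by
  intro n T hT c γ hγ
  obtain ⟨a, ⟨α⟩⟩ := S.exists_track_lift n hinv hzero (hex (hQ T) hT) γ
  refine S.isSecBoundary_of_whiskerExact n ?_ hγ a α
  rcases hLR with ⟨l, hl⟩ | ⟨r, hr⟩
  · exact (l.autRep hinv T).whiskerExact hinv (hex _ (hl _ hT) n)
  · exact (r.autRep hinv T).whiskerExact hinv (hr _ hex _ hT n)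

theorem statement13 {B : Type u} [Bicategory.{w, v} B] [Bicategory.Strict B]
    [StrictZero B]
    -- all tracks are invertible:
    (hinv : ∀ {X' Y' : B} {f g : X' ⟶ Y'} (η : f ⟶ g), IsIso η)
    -- the homotopy category is additive:
    [Preadditive (HoCat B)] [CategoryTheory.Limits.HasFiniteBiproducts (HoCat B)]
    (hzero : ∀ X Y : B, hQm (zmap X Y) = (0 : hQ X ⟶ hQ Y))
    -- the full track subcategory `𝐛` and the corresponding subcategory `𝐚 = 𝐛_≃`:
    (Pb : B → Prop)
    -- (a) `𝕃`-additive and `𝐚` closed under suspension, or (b) `ℝ`-additive with `ℝ`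
    -- preserving `𝐚`-exactness:
    (hLR :
      (∃ l : LAdditiveStr B, ∀ Z : HoCat B, Pb Z.as → Pb ((l.L.obj Z).as)) ∨
      (∃ r : RAdditiveStr B, ∀ A : ChainComplexZ (HoCat B),
         A.aExact (fun Z => Pb Z.as) →
         (A.mapComplex r.R r.Rzero).aExact (fun Z => Pb Z.as)))
    (S : SecChainComplex B)
    (hex : (S.hoComplex hzero).aExact (fun Z => Pb Z.as)) :
    S.IsSecExact Pb :=
  statement13_general hinv hzero Pb hLR S hex
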